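/- Let 𝐆 be a projective pile. Then every embedding problem for 𝐆 (not necessarily finite) has a solution: for every morphism of piles φ: 𝐆 → 𝐀 and every rigid epimorphism of piles α: 𝐁 → 𝐀, there exists a morphism of piles γ: 𝐆 → 𝐁 with α ∘ γ = φ. -/

import Mathlib

open Pointwise

/-- A pile `(G,T)`: a profinite group `G`, a profinite space `T`, and a continuous action
of `G` on `T`. -/
structure Pile : Type 1 where
  G : Type
  T : Type
  [grp : Group G]
  [topG : TopologicalSpace G]
  [tgG : IsTopologicalGroup G]
  [cG : CompactSpace G]
  [h2G : T2Space G]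
  [tdG : TotallyDisconnectedSpace G]
  [topT : TopologicalSpace T]
  [cT : CompactSpace T]
  [h2T : T2Space T]
  [tdT : TotallyDisconnectedSpace T]
  [act : MulAction G T]
  [csmul : ContinuousSMul G T]

attribute [instance] Pile.grp Pile.topG Pile.tgG Pile.cG Pile.h2G Pile.tdG
  Pile.topT Pile.cT Pile.h2T Pile.tdT Pile.act Pile.csmul

/-- A pile is finite if both its group and its space are finite. -/
def Pile.IsFinite (P : Pile) : Prop := Finite P.G ∧ Finite P.T

/-- A morphism of piles: a continuous group homomorphism together with a continuous
equivariant map of the spaces. -/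
structure PileHom (P Q : Pile) where
  toGrp : P.G →* Q.G
  contGrp : Continuous toGrp
  toSp : P.T → Q.T
  contSp : Continuous toSp
  equivariant : ∀ (g : P.G) (t : P.T), toSp (g • t) = toGrp g • toSp t

/-- Composition of pile morphisms. -/
def PileHom.comp {P Q R : Pile} (g : PileHom Q R) (f : PileHom P Q) : PileHom P R where
  toGrp := g.toGrp.comp f.toGrp
  contGrp := g.contGrp.comp f.contGrp
  toSp := g.toSp ∘ f.toSp
  contSp := g.contSp.comp f.contSp
  equivariant := fun a t => by
    simp [Function.comp, f.equivariant, g.equivariant]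

/-- A pile morphism is an epimorphism if it is surjective on groups and spaces and for
every point `x` of the target space there is a point `y` above it whose stabilizer maps
onto the stabilizer of `x`. -/
def PileHom.IsEpi {P Q : Pile} (f : PileHom P Q) : Prop :=
  Function.Surjective f.toGrp ∧ Function.Surjective f.toSp ∧
  ∀ x : Q.T, ∃ y : P.T, f.toSp y = x ∧
    (MulAction.stabilizer P.G y).map f.toGrp = MulAction.stabilizer Q.G x

/-- The induced map of orbit spaces. -/
def PileHom.orbitMap {P Q : Pile} (f : PileHom P Q) :
    Quotient (MulAction.orbitRel P.G P.T) → Quotient (MulAction.orbitRel Q.G Q.T) :=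
  Quotient.lift (fun t => Quotient.mk (MulAction.orbitRel Q.G Q.T) (f.toSp t))
    (fun t₁ t₂ h => Quotient.sound (by
      obtain ⟨g, hg⟩ := MulAction.mem_orbit_iff.mp h
      exact MulAction.mem_orbit_iff.mpr ⟨f.toGrp g, by rw [← hg, f.equivariant]⟩))

/-- A pile morphism is a rigid epimorphism if it is an epimorphism, maps each point
stabilizer isomorphically onto the stabilizer of the image point, and induces a
homeomorphism of the orbit spaces. -/
def PileHom.IsRigid {P Q : Pile} (f : PileHom P Q) : Prop :=
  f.IsEpi ∧
  (∀ y : P.T, Set.InjOn f.toGrp (MulAction.stabilizer P.G y) ∧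
    (MulAction.stabilizer P.G y).map f.toGrp = MulAction.stabilizer Q.G (f.toSp y)) ∧
  IsHomeomorph f.orbitMap

/-- A pile is projective if every finite embedding problem for it (a morphism `φ : 𝐆 → 𝐀`
together with a rigid epimorphism `α : 𝐁 → 𝐀` with `𝐁` a finite pile) has a solution. -/
def Pile.IsProjective (P : Pile) : Prop :=
  ∀ (A B : Pile), B.IsFinite →
    ∀ (φ : PileHom P A) (α : PileHom B A), α.IsRigid →
      ∃ γ : PileHom P B, α.comp γ = φ


/-! ### Auxiliary infrastructure -/

open Function Set Topology

section Infra

lemma discreteTopology_quot {X : Type} [TopologicalSpace X] [DiscreteTopology X]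
    (s : Setoid X) : DiscreteTopology (Quotient s) :=
  discreteTopology_iff_isOpen_singleton.mpr fun _ =>
    isQuotientMap_quotient_mk'.isOpen_preimage.mp (isOpen_discrete _)

lemma discreteTopology_quotientGroup_of_isOpen {G : Type} [Group G] [TopologicalSpace G]
    [IsTopologicalGroup G] (M : Subgroup G) (hM : IsOpen (M : Set G)) :
    DiscreteTopology (G ⧸ M) := by
  refine discreteTopology_iff_isOpen_singleton.mpr fun q => ?_
  obtain ⟨g, rfl⟩ := Quotient.exists_rep q
  refine (QuotientGroup.isQuotientMap_mk M).isOpen_preimage.mp ?_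
  have h : (QuotientGroup.mk : G → G ⧸ M) ⁻¹' {Quotient.mk _ g} =
      (fun h => g⁻¹ * h) ⁻¹' (M : Set G) := by
    ext h
    simp only [Set.mem_preimage, Set.mem_singleton_iff, SetLike.mem_coe]
    rw [show (Quotient.mk _ g : G ⧸ M) = QuotientGroup.mk g from rfl]
    constructor
    · intro he; exact QuotientGroup.eq.mp he.symm
    · intro hm; exact (QuotientGroup.eq.mpr hm).symm
  rw [h]
  exact hM.preimage (continuous_const.mul continuous_id)

lemma exists_clopen_nhd_not_mem {X : Type} [TopologicalSpace X] [T2Space X] [CompactSpace X]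
    [TotallyDisconnectedSpace X] {x y : X} (h : y ≠ x) : ∃ U, IsClopen U ∧ x ∈ U ∧ y ∉ U := by
  obtain ⟨V, hV, hxV, hVsub⟩ := isTopologicalBasis_isClopen.exists_subset_of_mem_open
    (show x ∈ ({y}ᶜ : Set X) from fun hx => h hx.symm) isOpen_compl_singleton
  exact ⟨V, hV, hxV, fun hy => (hVsub hy) rfl⟩

/-- Extensionality for pile morphisms. -/
lemma PileHom.ext' {P Q : Pile} {f g : PileHom P Q} (h1 : f.toGrp = g.toGrp)
    (h2 : f.toSp = g.toSp) : f = g := by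
  cases f; cases g
  simp only [PileHom.mk.injEq] at *
  exact ⟨h1, h2⟩

end Infra

/-! ### Finite quotient piles -/

section FinPile

variable (G T : Type) [Group G] [TopologicalSpace G] [DiscreteTopology G]
  [TopologicalSpace T] [DiscreteTopology T] [MulAction G T] [Finite G] [Finite T]

/-- A finite pile with the discrete topology. -/
@[reducible] def finPile : Pile where
  G := G
  T := T
  tgG := { continuous_mul := continuous_of_discreteTopology
           continuous_inv := continuous_of_discreteTopology }
  csmul := ⟨continuous_of_discreteTopology⟩

variable (N : Subgroup G) [hN : N.Normal]

/-- The orbit equivalence relation of a (normal) subgroup. -/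
def orbSetoid : Setoid T where
  r a b := ∃ n ∈ N, n • a = b
  iseqv := by
    refine ⟨fun a => ⟨1, N.one_mem, one_smul _ _⟩, ?_, ?_⟩
    · rintro a b ⟨n, hn, rfl⟩
      exact ⟨n⁻¹, N.inv_mem hn, inv_smul_smul n a⟩
    · rintro a b c ⟨n, hn, rfl⟩ ⟨m, hm, rfl⟩
      exact ⟨m * n, N.mul_mem hm hn, mul_smul m n a⟩

/-- The action of `G ⧸ N` on the orbit space of `N`. -/
instance quotAct : MulAction (G ⧸ N) (Quotient (orbSetoid G T N)) where
  smul gq tq := Quotient.liftOn₂' gq tq (fun g t => Quotient.mk _ (g • t)) (by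
    intro g₁ t₁ g₂ t₂ hg ht
    apply Quotient.sound
    obtain ⟨n, hn, hnt⟩ := ht
    have hg' : g₁⁻¹ * g₂ ∈ N := QuotientGroup.leftRel_apply.mp hg
    refine ⟨g₂ * n * g₂⁻¹ * (g₂ * g₁⁻¹), ?_, ?_⟩
    · refine N.mul_mem (hN.conj_mem n hn g₂) ?_
      have : g₂ * g₁⁻¹ = g₂ * (g₁⁻¹ * g₂) * g₂⁻¹ := by group
      rw [this]
      exact hN.conj_mem _ hg' g₂
    · show (g₂ * n * g₂⁻¹ * (g₂ * g₁⁻¹)) • (g₁ • t₁) = g₂ • t₂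
      rw [← hnt]
      simp only [smul_smul]
      congr 1
      group)
  one_smul tq := by
    refine Quotient.inductionOn tq (fun t => ?_)
    show Quotient.mk _ ((1 : G) • t) = _
    rw [one_smul]
  mul_smul x y tq := by
    refine Quotient.inductionOn tq (fun t => ?_)
    refine Quotient.inductionOn₂ x y (fun a b => ?_)
    show Quotient.mk _ ((a * b) • t) = Quotient.mk _ (a • (b • t))
    rw [mul_smul]

instance : DiscreteTopology (G ⧸ N) :=
  haveI : IsTopologicalGroup G :=
    { continuous_mul := continuous_of_discreteTopology
      continuous_inv := continuous_of_discreteTopology }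
  discreteTopology_quotientGroup_of_isOpen N (isOpen_discrete _)

instance : DiscreteTopology (Quotient (orbSetoid G T N)) := discreteTopology_quot _

@[reducible] def quotFinPile : Pile := finPile (G ⧸ N) (Quotient (orbSetoid G T N))

/-- The quotient morphism of piles. -/
def quotFinHom : PileHom (finPile G T) (quotFinPile G T N) where
  toGrp := QuotientGroup.mk' N
  contGrp := continuous_of_discreteTopology
  toSp := Quotient.mk (orbSetoid G T N)
  contSp := continuous_of_discreteTopology
  equivariant := fun g t => rfl

lemma quotFinHom_mk_smul (g : G) (t : T) :
    (QuotientGroup.mk g : G ⧸ N) • (Quotient.mk (orbSetoid G T N) t)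
      = Quotient.mk (orbSetoid G T N) (g • t) := rfl

lemma quotFinHom_stab_map (t : T)
    (hfree : ∀ n ∈ N, ∀ t : T, n • t = t → n = 1) :
    (MulAction.stabilizer G t).map (QuotientGroup.mk' N)
      = MulAction.stabilizer (G ⧸ N) (Quotient.mk (orbSetoid G T N) t) := by
  ext w
  constructor
  · rintro ⟨g, hg, rfl⟩
    rw [SetLike.mem_coe, MulAction.mem_stabilizer_iff] at hg
    rw [MulAction.mem_stabilizer_iff]
    show (QuotientGroup.mk g : G ⧸ N) • _ = _
    rw [quotFinHom_mk_smul, hg]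
  · intro hw
    obtain ⟨g, rfl⟩ := QuotientGroup.mk'_surjective N w
    rw [MulAction.mem_stabilizer_iff] at hw
    have : (QuotientGroup.mk g : G ⧸ N) • (Quotient.mk (orbSetoid G T N) t)
        = Quotient.mk (orbSetoid G T N) t := hw
    rw [quotFinHom_mk_smul] at this
    obtain ⟨n, hn, hnt⟩ := Quotient.exact this
    refine ⟨n * g, ?_, ?_⟩
    · simp only [SetLike.mem_coe, MulAction.mem_stabilizer_iff]
      rw [mul_smul, hnt]
    · show QuotientGroup.mk (n * g) = QuotientGroup.mk g
      rw [QuotientGroup.eq]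
      have h2 : (n * g)⁻¹ * g = g⁻¹ * n⁻¹ * g := by group
      rw [h2]
      exact hN.conj_mem' _ (N.inv_mem hn) g

lemma quotFinHom_isRigid (hfree : ∀ n ∈ N, ∀ t : T, n • t = t → n = 1) :
    (quotFinHom G T N).IsRigid := by
  have hinj : ∀ y : T, Set.InjOn (QuotientGroup.mk' N) (MulAction.stabilizer G y) := by
    intro y a ha b hb hab
    rw [SetLike.mem_coe, MulAction.mem_stabilizer_iff] at ha hb
    have hmem : a⁻¹ * b ∈ N := QuotientGroup.eq.mp hab
    have hinv : a⁻¹ • y = y := by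
      rw [inv_smul_eq_iff, ha]
    have hst : (a⁻¹ * b) • y = y := by
      rw [mul_smul, hb, hinv]
    have := hfree _ hmem y hst
    have : a * (a⁻¹ * b) = a * 1 := by rw [this]
    simpa [mul_assoc] using this.symm
  refine ⟨⟨QuotientGroup.mk'_surjective N, ?_, ?_⟩, ?_, ?_⟩
  · -- surjectivity on spaces
    intro x
    obtain ⟨t, ht⟩ := Quotient.exists_rep x
    exact ⟨t, ht⟩
  · -- epi condition
    intro x
    obtain ⟨t, ht⟩ := Quotient.exists_rep x
    exact ⟨t, ht, by rw [← ht]; exact quotFinHom_stab_map G T N t hfree⟩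
  · -- rigidity on stabilizers
    intro y
    exact ⟨hinj y, quotFinHom_stab_map G T N y hfree⟩
  · -- orbit map is a homeomorphism
    haveI : DiscreteTopology
        (Quotient (MulAction.orbitRel (finPile G T).G (finPile G T).T)) :=
      discreteTopology_quot _
    haveI : DiscreteTopology
        (Quotient (MulAction.orbitRel (quotFinPile G T N).G (quotFinPile G T N).T)) :=
      discreteTopology_quot _
    refine ⟨continuous_of_discreteTopology, fun s _ => isOpen_discrete _, ?_, ?_⟩
    · -- injective
      intro q q' h
      obtain ⟨u, rfl⟩ := Quotient.exists_rep q
      obtain ⟨v, rfl⟩ := Quotient.exists_rep q'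
      have h' : Quotient.mk (MulAction.orbitRel (quotFinPile G T N).G (quotFinPile G T N).T)
          ((quotFinHom G T N).toSp u) = Quotient.mk _ ((quotFinHom G T N).toSp v) := h
      have hrel := Quotient.exact h'
      obtain ⟨w, hw⟩ := MulAction.mem_orbit_iff.mp hrel
      obtain ⟨g, rfl⟩ := QuotientGroup.mk'_surjective N w
      have : Quotient.mk (orbSetoid G T N) (g • v) = Quotient.mk (orbSetoid G T N) u := hw
      obtain ⟨n, hn, hnt⟩ := Quotient.exact this
      apply Quotient.sound
      refine MulAction.mem_orbit_iff.mpr ⟨n * g, ?_⟩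
      show (n * g) • v = u
      rw [mul_smul, hnt]
    · -- surjective
      intro q
      obtain ⟨x, hx⟩ := Quotient.exists_rep q
      obtain ⟨t, ht⟩ := Quotient.exists_rep x
      exact ⟨Quotient.mk _ t, by rw [← hx, ← ht]; rfl⟩

end FinPile


/-! ### Combinatorial lemmas on profinite spaces -/

section Combinatorics

variable {H S : Type} [TopologicalSpace H] [TopologicalSpace S]
  [CompactSpace H] [CompactSpace S] [T2Space H] [T2Space S]
  [TotallyDisconnectedSpace H] [TotallyDisconnectedSpace S]

/-- A continuous function on a product of profinite spaces with values in a finite set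
depends, in its first variable, only on finitely many "patterns". -/
lemma pattern_lemma {F : Type} [Finite F] (χ : H × S → F)
    (hχ : ∀ f : F, IsOpen {q | χ q = f}) :
    ∃ (ι : Type) (_ : Finite ι) (rep : ι → H),
      ∀ g : H, ∃ l : ι, ∀ y : S, χ (g, y) = χ (rep l, y) := by
  classical
  have hbox : ∀ q : H × S, ∃ U : Set H, ∃ V : Set S, IsClopen U ∧ IsClopen V ∧
      q.1 ∈ U ∧ q.2 ∈ V ∧ ∀ g' ∈ U, ∀ y' ∈ V, χ (g', y') = χ q := by
    intro q
    have hqopen : IsOpen {q' : H × S | χ q' = χ q} := hχ (χ q)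
    have hbasis := (isTopologicalBasis_isClopen (X := H)).prod
      (isTopologicalBasis_isClopen (X := S))
    obtain ⟨w, hw, hqw, hsub⟩ := hbasis.exists_subset_of_mem_open
      (show q ∈ {q' : H × S | χ q' = χ q} from rfl) hqopen
    obtain ⟨U, hU, V, hV, rfl⟩ := hw
    refine ⟨U, V, hU, hV, hqw.1, hqw.2, ?_⟩
    intro g' hg' y' hy'
    exact hsub ⟨hg', hy'⟩
  choose U V hU hV hq1 hq2 hconst using hbox
  have hcov : (Set.univ : Set (H × S)) ⊆ ⋃ q, U q ×ˢ V q :=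
    fun q _ => Set.mem_iUnion.mpr ⟨q, hq1 q, hq2 q⟩
  obtain ⟨t, hcov'⟩ := isCompact_univ.elim_finite_subcover (fun q => U q ×ˢ V q)
    (fun q => (hU q).2.prod ((hV q).2)) hcov
  let patOf : H → Set {q // q ∈ t} := fun g => {i | g ∈ U i.1}
  refine ⟨{s : Set {q // q ∈ t} // ∃ g, patOf g = s}, inferInstance,
    fun i => i.2.choose, ?_⟩
  have hkey : ∀ g g' : H, patOf g = patOf g' → ∀ y : S, χ (g, y) = χ (g', y) := by
    intro g g' hp y
    have hmem : (g, y) ∈ ⋃ q ∈ t, U q ×ˢ V q := hcov' (Set.mem_univ _)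
    simp only [Set.mem_iUnion] at hmem
    obtain ⟨q, hqt, hgy⟩ := hmem
    have hg : g ∈ U q := hgy.1
    have hy : y ∈ V q := hgy.2
    have hi : (⟨q, hqt⟩ : {q // q ∈ t}) ∈ patOf g := hg
    rw [hp] at hi
    calc χ (g, y) = χ q := hconst q g hg y hy
      _ = χ (g', y) := (hconst q g' hi y hy).symm
  intro g
  refine ⟨⟨patOf g, g, rfl⟩, ?_⟩
  intro y
  exact hkey g _ (⟨patOf g, g, rfl⟩ : {s : Set {q // q ∈ t} // ∃ g, patOf g = s}).2.choose_spec.symm y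

variable [Group H] [IsTopologicalGroup H] [MulAction H S] [ContinuousSMul H S]

/-- For a compact set of group elements moving every point, there is a finite clopen
colouring such that each of these elements moves every colour. -/
lemma displacement_lemma (Kc : Set H) (hKc : IsCompact Kc)
    (hmove : ∀ k ∈ Kc, ∀ p : S, k • p ≠ p) :
    ∃ (F : Type) (_ : Finite F) (col : S → F),
      (∀ f : F, IsOpen {p | col p = f}) ∧ ∀ k ∈ Kc, ∀ p : S, col (k • p) ≠ col p := by
  classical
  have hbox : ∀ w : H × S, w.1 ∈ Kc → ∃ O : Set H, ∃ V : Set S, IsOpen O ∧ IsClopen V ∧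
      w.1 ∈ O ∧ w.2 ∈ V ∧ ∀ k' ∈ O, ∀ p' ∈ V, k' • p' ∉ V := by
    rintro ⟨k, p⟩ hk
    obtain ⟨V₀, hV₀, hpV₀, hkpV₀⟩ :=
      exists_clopen_nhd_not_mem (x := p) (y := k • p) (hmove k hk p)
    have hopen : IsOpen ((fun q : H × S => q.1 • q.2) ⁻¹' V₀ᶜ) :=
      (hV₀.compl.2).preimage continuous_smul
    have hmem : (k, p) ∈ (fun q : H × S => q.1 • q.2) ⁻¹' V₀ᶜ := hkpV₀
    obtain ⟨O, V₁, hO, hV₁, hkO, hpV₁, hsub⟩ := isOpen_prod_iff.mp hopen k p hmem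
    obtain ⟨V₂, hV₂, hpV₂, hV₂sub⟩ :=
      isTopologicalBasis_isClopen.exists_subset_of_mem_open
        (show p ∈ V₀ ∩ V₁ from ⟨hpV₀, hpV₁⟩) ((hV₀.2).inter hV₁)
    refine ⟨O, V₂, hO, hV₂, hkO, hpV₂, ?_⟩
    intro k' hk' p' hp'
    have h1 : ((k', p') : H × S) ∈ (fun q : H × S => q.1 • q.2) ⁻¹' V₀ᶜ :=
      hsub ⟨hk', (hV₂sub hp').2⟩
    exact fun hmem2 => h1 (hV₂sub hmem2).1
  have hbox' := fun (w : {w : H × S // w.1 ∈ Kc}) => hbox w.1 w.2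
  choose O V hO hV hkO hpV hdisj using hbox'
  have hcov : Kc ×ˢ (Set.univ : Set S) ⊆ ⋃ w : {w : H × S // w.1 ∈ Kc}, O w ×ˢ V w := by
    rintro ⟨k, p⟩ ⟨hk, -⟩
    exact Set.mem_iUnion.mpr ⟨⟨(k, p), hk⟩, hkO _, hpV _⟩
  obtain ⟨u, hcov'⟩ := (hKc.prod isCompact_univ).elim_finite_subcover
    (fun w => O w ×ˢ V w) (fun w => (hO w).prod (hV w).2) hcov
  refine ⟨Set {i // i ∈ u}, inferInstance, fun p => {i | p ∈ V i.1}, ?_, ?_⟩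
  · intro f
    have heq : {p : S | {i : {i // i ∈ u} | p ∈ V i.1} = f}
        = ⋂ i : {i // i ∈ u}, {p : S | p ∈ V i.1 ↔ i ∈ f} := by
      ext p
      simp only [Set.mem_setOf_eq, Set.mem_iInter, Set.ext_iff]
    rw [heq]
    refine isOpen_iInter_of_finite fun i => ?_
    rcases em (i ∈ f) with hif | hif
    · have : {p : S | p ∈ V i.1 ↔ i ∈ f} = V i.1 := by
        ext p; simp [hif]
      rw [this]; exact (hV i.1).2
    · have : {p : S | p ∈ V i.1 ↔ i ∈ f} = (V i.1)ᶜ := by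
        ext p; simp [hif]
      rw [this]; exact (hV i.1).compl.2
  · intro k hk p hcp
    have hmem : (k, p) ∈ ⋃ i ∈ u, O i ×ˢ V i := hcov' ⟨hk, Set.mem_univ _⟩
    simp only [Set.mem_iUnion] at hmem
    obtain ⟨i, hiu, hki, hpi⟩ := hmem
    have hcp' : {j : {i // i ∈ u} | (k • p) ∈ V j.1} = {j : {i // i ∈ u} | p ∈ V j.1} := hcp
    have h1 : (⟨i, hiu⟩ : {i // i ∈ u}) ∈ {j : {i // i ∈ u} | p ∈ V j.1} := hpi
    rw [← hcp'] at h1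
    exact hdisj i k hki p hpi h1
  
end Combinatorics

/-! ### The fiber product framework -/

section FiberProduct

variable (P A B : Pile)

instance prodPileSMul : SMul (P.G × B.G) (P.T × B.T) :=
  ⟨fun d p => (d.1 • p.1, d.2 • p.2)⟩

lemma prodSmul_def (d : P.G × B.G) (p : P.T × B.T) :
    d • p = (d.1 • p.1, d.2 • p.2) := rfl

instance prodPileAction : MulAction (P.G × B.G) (P.T × B.T) where
  one_smul p := by
    show ((1 : P.G × B.G).1 • p.1, (1 : P.G × B.G).2 • p.2) = p
    simp
  mul_smul d d' p := by
    show (((d * d').1) • p.1, ((d * d').2) • p.2) = _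
    simp [prodSmul_def, mul_smul]

lemma continuous_prodSmul :
    Continuous fun q : (P.G × B.G) × (P.T × B.T) => q.1 • q.2 := by
  apply Continuous.prodMk
  · exact continuous_smul.comp
      ((continuous_fst.comp continuous_fst).prodMk (continuous_fst.comp continuous_snd))
  · exact continuous_smul.comp
      ((continuous_snd.comp continuous_fst).prodMk (continuous_snd.comp continuous_snd))

variable {P A B} (φ : PileHom P A) (α : PileHom B A)

/-- A "good pair": a candidate subpile of the fiber product through which the embedding
problem can be solved. -/
structure GoodPair (c : Set (P.G × B.G) × Set (P.T × B.T)) : Prop where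
  one_mem : (1 : P.G × B.G) ∈ c.1
  inv_mem : ∀ d ∈ c.1, d⁻¹ ∈ c.1
  mul_mem : ∀ d ∈ c.1, ∀ d' ∈ c.1, d * d' ∈ c.1
  closedG : IsClosed c.1
  closedS : IsClosed c.2
  compatG : ∀ d ∈ c.1, φ.toGrp d.1 = α.toGrp d.2
  compatS : ∀ p ∈ c.2, φ.toSp p.1 = α.toSp p.2
  smul_mem : ∀ d ∈ c.1, ∀ p ∈ c.2, d • p ∈ c.2
  e1 : ∀ g : P.G, ∃ d ∈ c.1, d.1 = g
  e2 : ∀ t : P.T, ∃ p ∈ c.2, p.1 = t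
  e3 : ∀ p ∈ c.2, ∀ g : P.G, g • p.1 = p.1 → ∃ d ∈ c.1, d.1 = g ∧ d • p = p
  e4 : ∀ p ∈ c.2, ∀ p' ∈ c.2, (∃ g : P.G, g • p'.1 = p.1) → ∃ d ∈ c.1, d • p' = p

/-- The full fiber product is a good pair. -/
lemma goodPair_top (hα : α.IsRigid) :
    GoodPair φ α ({d | φ.toGrp d.1 = α.toGrp d.2}, {p | φ.toSp p.1 = α.toSp p.2}) := by
  obtain ⟨⟨hsurjG, hsurjT, _⟩, hstab, hhomeo⟩ := hα
  constructor
  · show φ.toGrp 1 = α.toGrp 1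
    simp
  · intro d hd
    show φ.toGrp d.1⁻¹ = α.toGrp d.2⁻¹
    simp only [map_inv]
    rw [hd]
  · intro d hd d' hd'
    show φ.toGrp (d.1 * d'.1) = α.toGrp (d.2 * d'.2)
    simp only [map_mul]
    rw [hd, hd']
  · exact isClosed_eq (φ.contGrp.comp continuous_fst) (α.contGrp.comp continuous_snd)
  · exact isClosed_eq (φ.contSp.comp continuous_fst) (α.contSp.comp continuous_snd)
  · exact fun d hd => hd
  · exact fun p hp => hp
  · intro d hd p hp
    show φ.toSp (d.1 • p.1) = α.toSp (d.2 • p.2)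
    rw [φ.equivariant, α.equivariant, hd, hp]
  · intro g
    obtain ⟨b, hb⟩ := hsurjG (φ.toGrp g)
    exact ⟨(g, b), hb.symm, rfl⟩
  · intro t
    obtain ⟨y, hy⟩ := hsurjT (φ.toSp t)
    exact ⟨(t, y), hy.symm, rfl⟩
  · rintro ⟨t, y⟩ hp g hg
    have hsy := (hstab y).2
    have hmem : φ.toGrp g ∈ MulAction.stabilizer A.G (α.toSp y) := by
      rw [MulAction.mem_stabilizer_iff, ← hp, ← φ.equivariant, hg]
    rw [← hsy] at hmem
    obtain ⟨b, hb, hab⟩ := hmem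
    rw [SetLike.mem_coe, MulAction.mem_stabilizer_iff] at hb
    refine ⟨(g, b), ?_, rfl, ?_⟩
    · show φ.toGrp g = α.toGrp b
      rw [hab]
    · show ((g, b) : P.G × B.G) • (t, y) = (t, y)
      rw [prodSmul_def]
      simp only [hg, hb]
  · rintro ⟨t, y⟩ hp ⟨t', y'⟩ hp' ⟨g, hg⟩
    -- α.toSp y ∈ A-orbit of α.toSp y'
    have h1 : φ.toGrp g • α.toSp y' = α.toSp y := by
      rw [← hp', ← φ.equivariant, hg, hp]
    -- same orbit downstairs, so same B-orbit upstairs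
    have horb : Quotient.mk (MulAction.orbitRel B.G B.T) y
        = Quotient.mk (MulAction.orbitRel B.G B.T) y' := by
      apply hhomeo.injective (f := α.orbitMap)
      show Quotient.mk _ (α.toSp y) = Quotient.mk _ (α.toSp y')
      apply Quotient.sound
      exact MulAction.mem_orbit_iff.mpr ⟨φ.toGrp g, h1⟩
    obtain ⟨b, hb⟩ := MulAction.mem_orbit_iff.mp (Quotient.exact horb)
    -- (α b)⁻¹ · φ g stabilizes α y'
    have h2 : (α.toGrp b)⁻¹ * φ.toGrp g ∈ MulAction.stabilizer A.G (α.toSp y') := by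
      rw [MulAction.mem_stabilizer_iff, mul_smul, h1, ← hb, α.equivariant, inv_smul_smul]
    rw [← (hstab y').2] at h2
    obtain ⟨b₂, hb₂, hab₂⟩ := h2
    rw [SetLike.mem_coe, MulAction.mem_stabilizer_iff] at hb₂
    refine ⟨(g, b * b₂), ?_, ?_⟩
    · show φ.toGrp g = α.toGrp (b * b₂)
      rw [map_mul, hab₂]
      group
    · show (((g, b * b₂) : P.G × B.G)) • (t', y') = (t, y)
      rw [prodSmul_def]
      simp only [hg, mul_smul, hb₂, hb]

/-- consequence: fibers of the first projection on the space part are orbits of the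
"kernel" part of the group. -/
lemma GoodPair.kfiber {c} (hc : GoodPair φ α c) {p p' : P.T × B.T} (hp : p ∈ c.2)
    (hp' : p' ∈ c.2) (h : p.1 = p'.1) : ∃ k ∈ c.1, k.1 = 1 ∧ k • p' = p := by
  obtain ⟨h₀, hh₀, hh₀p⟩ := hc.e4 p hp p' hp' ⟨1, by rw [one_smul, h]⟩
  have hstab : h₀.1 • p'.1 = p'.1 := by
    have := congrArg Prod.fst hh₀p
    rw [prodSmul_def] at this
    simp only at this
    rw [this, h]
  obtain ⟨d, hd, hd1, hdp⟩ := hc.e3 p' hp' h₀.1 hstab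
  refine ⟨h₀ * d⁻¹, hc.mul_mem _ hh₀ _ (hc.inv_mem _ hd), ?_, ?_⟩
  · show h₀.1 * (d⁻¹).1 = 1
    have : (d⁻¹).1 = d.1⁻¹ := rfl
    rw [this, hd1, mul_inv_cancel]
  · rw [mul_smul]
    have : d⁻¹ • p' = p' := by
      rw [inv_smul_eq_iff, hdp]
    rw [this, hh₀p]

/-- Freeness of the kernel on the fibers. -/
lemma GoodPair.kfree (hα : α.IsRigid) {c} (hc : GoodPair φ α c) {k : P.G × B.G}
    (hk : k ∈ c.1) (h1 : k.1 = 1) {p : P.T × B.T} (hp : p ∈ c.2) (hfix : k • p = p) :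
    k = 1 := by
  have hker : α.toGrp k.2 = 1 := by
    have := hc.compatG k hk
    rw [h1] at this
    simpa using this.symm
  have hstab : k.2 • p.2 = p.2 := by
    have := congrArg Prod.snd hfix
    rw [prodSmul_def] at this
    exact this
  have hinj := (hα.2.1 p.2).1
  have h2 : k.2 = 1 := by
    apply hinj (MulAction.mem_stabilizer_iff.mpr hstab)
      (by rw [SetLike.mem_coe]; exact (MulAction.stabilizer B.G p.2).one_mem)
    rw [map_one, hker]
  have : k = (k.1, k.2) := rfl
  rw [this, h1, h2]
  rfl

/-- Zorn's lemma: there is a minimal good pair. -/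
lemma exists_minimal_goodPair (hα : α.IsRigid) :
    ∃ c, GoodPair φ α c ∧ ∀ c', GoodPair φ α c' → c'.1 ⊆ c.1 → c'.2 ⊆ c.2 → c' = c := by
  classical
  let s : Set ((Set (P.G × B.G) × Set (P.T × B.T))ᵒᵈ) :=
    {c | GoodPair φ α (OrderDual.ofDual c)}
  have hzorn : ∀ ch ⊆ s, IsChain (· ≤ ·) ch → ∀ y ∈ ch, ∃ ub ∈ s, ∀ z ∈ ch, z ≤ ub := by
    intro ch hchs hchain y hy
    haveI hne : Nonempty ↥ch := ⟨⟨y, hy⟩⟩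
    have hgood : ∀ i : ↥ch, GoodPair φ α (OrderDual.ofDual i.1) := fun i => hchs i.2
    set I1 : Set (P.G × B.G) := ⋂ i : ↥ch, (OrderDual.ofDual i.1).1 with hI1
    set I2 : Set (P.T × B.T) := ⋂ i : ↥ch, (OrderDual.ofDual i.1).2 with hI2
    have htot : ∀ i j : ↥ch,
        ((OrderDual.ofDual j.1).1 ⊆ (OrderDual.ofDual i.1).1 ∧
         (OrderDual.ofDual j.1).2 ⊆ (OrderDual.ofDual i.1).2) ∨
        ((OrderDual.ofDual i.1).1 ⊆ (OrderDual.ofDual j.1).1 ∧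
         (OrderDual.ofDual i.1).2 ⊆ (OrderDual.ofDual j.1).2) := by
      intro i j
      rcases eq_or_ne i.1 j.1 with h | h
      · left; rw [h]; exact ⟨subset_rfl, subset_rfl⟩
      rcases hchain i.2 j.2 h with h' | h'
      · left; exact ⟨(Prod.le_def.mp h').1, (Prod.le_def.mp h').2⟩
      · right; exact ⟨(Prod.le_def.mp h').1, (Prod.le_def.mp h').2⟩
    have key1 : ∀ Z : Set (P.G × B.G), IsClosed Z →
        (∀ i : ↥ch, (((OrderDual.ofDual i.1).1) ∩ Z).Nonempty) → (I1 ∩ Z).Nonempty := by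
      intro Z hZ hne'
      have hdir : Directed (· ⊇ ·) (fun i : ↥ch => (OrderDual.ofDual i.1).1 ∩ Z) := by
        intro i j
        rcases htot i j with ⟨h, _⟩ | ⟨h, _⟩
        · exact ⟨j, Set.inter_subset_inter_left Z h, subset_rfl⟩
        · exact ⟨i, subset_rfl, Set.inter_subset_inter_left Z h⟩
      have hcl : ∀ i : ↥ch, IsClosed ((OrderDual.ofDual i.1).1 ∩ Z) :=
        fun i => (hgood i).closedG.inter hZ
      have := IsCompact.nonempty_iInter_of_directed_nonempty_isCompact_isClosed
        (fun i : ↥ch => (OrderDual.ofDual i.1).1 ∩ Z) hdir hne'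
        (fun i => (hcl i).isCompact) hcl
      obtain ⟨x, hx⟩ := this
      exact ⟨x, Set.mem_iInter.mpr (fun i => (Set.mem_iInter.mp hx i).1),
        (Set.mem_iInter.mp hx ⟨y, hy⟩).2⟩
    have key2 : ∀ Z : Set (P.T × B.T), IsClosed Z →
        (∀ i : ↥ch, (((OrderDual.ofDual i.1).2) ∩ Z).Nonempty) → (I2 ∩ Z).Nonempty := by
      intro Z hZ hne'
      have hdir : Directed (· ⊇ ·) (fun i : ↥ch => (OrderDual.ofDual i.1).2 ∩ Z) := by
        intro i j
        rcases htot i j with ⟨_, h⟩ | ⟨_, h⟩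
        · exact ⟨j, Set.inter_subset_inter_left Z h, subset_rfl⟩
        · exact ⟨i, subset_rfl, Set.inter_subset_inter_left Z h⟩
      have hcl : ∀ i : ↥ch, IsClosed ((OrderDual.ofDual i.1).2 ∩ Z) :=
        fun i => (hgood i).closedS.inter hZ
      have := IsCompact.nonempty_iInter_of_directed_nonempty_isCompact_isClosed
        (fun i : ↥ch => (OrderDual.ofDual i.1).2 ∩ Z) hdir hne'
        (fun i => (hcl i).isCompact) hcl
      obtain ⟨x, hx⟩ := this
      exact ⟨x, Set.mem_iInter.mpr (fun i => (Set.mem_iInter.mp hx i).1),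
        (Set.mem_iInter.mp hx ⟨y, hy⟩).2⟩
    have hgoodI : GoodPair φ α (I1, I2) := by
      constructor
      · exact Set.mem_iInter.mpr fun i => (hgood i).one_mem
      · intro d hd
        exact Set.mem_iInter.mpr fun i => (hgood i).inv_mem d (Set.mem_iInter.mp hd i)
      · intro d hd d' hd'
        exact Set.mem_iInter.mpr fun i =>
          (hgood i).mul_mem d (Set.mem_iInter.mp hd i) d' (Set.mem_iInter.mp hd' i)
      · exact isClosed_iInter fun i => (hgood i).closedG
      · exact isClosed_iInter fun i => (hgood i).closedS
      · intro d hd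
        exact (hgood ⟨y, hy⟩).compatG d (Set.mem_iInter.mp hd ⟨y, hy⟩)
      · intro p hp
        exact (hgood ⟨y, hy⟩).compatS p (Set.mem_iInter.mp hp ⟨y, hy⟩)
      · intro d hd p hp
        exact Set.mem_iInter.mpr fun i =>
          (hgood i).smul_mem d (Set.mem_iInter.mp hd i) p (Set.mem_iInter.mp hp i)
      · intro g
        have := key1 (Prod.fst ⁻¹' {g}) (isClosed_singleton.preimage continuous_fst)
          (fun i => by
            obtain ⟨d, hd, hd1⟩ := (hgood i).e1 g
            exact ⟨d, hd, hd1⟩)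
        obtain ⟨d, hd1, hd2⟩ := this
        exact ⟨d, hd1, hd2⟩
      · intro t
        have := key2 (Prod.fst ⁻¹' {t}) (isClosed_singleton.preimage continuous_fst)
          (fun i => by
            obtain ⟨p, hp, hp1⟩ := (hgood i).e2 t
            exact ⟨p, hp, hp1⟩)
        obtain ⟨p, hp1, hp2⟩ := this
        exact ⟨p, hp1, hp2⟩
      · intro p hp g hg
        have hZ : IsClosed {d : P.G × B.G | d.1 = g ∧ d • p = p} := by
          refine IsClosed.inter (isClosed_eq continuous_fst continuous_const) ?_
          exact isClosed_eq
            ((continuous_prodSmul P B).comp (continuous_id.prodMk continuous_const)) 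
            continuous_const
        have := key1 _ hZ (fun i => by
          obtain ⟨d, hd, hd1, hd2⟩ := (hgood i).e3 p (Set.mem_iInter.mp hp i) g hg
          exact ⟨d, hd, hd1, hd2⟩)
        obtain ⟨d, hd1, hd2, hd3⟩ := this
        exact ⟨d, hd1, hd2, hd3⟩
      · intro p hp p' hp' hex
        have hZ : IsClosed {d : P.G × B.G | d • p' = p} :=
          isClosed_eq
            ((continuous_prodSmul P B).comp (continuous_id.prodMk continuous_const))
            continuous_const
        have := key1 _ hZ (fun i => by
          obtain ⟨d, hd, hd1⟩ := (hgood i).e4 p (Set.mem_iInter.mp hp i) p'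
            (Set.mem_iInter.mp hp' i) hex
          exact ⟨d, hd, hd1⟩)
        obtain ⟨d, hd1, hd2⟩ := this
        exact ⟨d, hd1, hd2⟩
    refine ⟨OrderDual.toDual (I1, I2), hgoodI, ?_⟩
    intro z hz
    show (I1, I2) ≤ OrderDual.ofDual z
    rw [Prod.le_def]
    exact ⟨Set.iInter_subset (fun i : ↥ch => (OrderDual.ofDual i.1).1) ⟨z, hz⟩,
      Set.iInter_subset (fun i : ↥ch => (OrderDual.ofDual i.1).2) ⟨z, hz⟩⟩
  obtain ⟨m, _, hmem, hmax⟩ := zorn_le_nonempty₀ s hzorn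
    (OrderDual.toDual ({d | φ.toGrp d.1 = α.toGrp d.2}, {p | φ.toSp p.1 = α.toSp p.2}))
    (goodPair_top φ α hα)
  refine ⟨OrderDual.ofDual m, hmem, ?_⟩
  intro c' hc' h1 h2
  have hle : m ≤ OrderDual.toDual c' := by
    show c' ≤ OrderDual.ofDual m
    rw [Prod.le_def]
    exact ⟨h1, h2⟩
  have := hmax hc' hle
  have hge : OrderDual.ofDual m ≤ c' := this
  rw [Prod.le_def] at hge
  ext1
  · exact Set.Subset.antisymm h1 hge.1
  · exact Set.Subset.antisymm h2 hge.2

end FiberProduct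

section Descent

variable {P A B : Pile} (φ : PileHom P A) (α : PileHom B A)

set_option maxHeartbeats 2000000 in
/-- Key descent lemma: for a minimal good pair, the kernel of the first projection
is trivial. -/
lemma goodPair_min_ker_trivial (hP : P.IsProjective) (hα : α.IsRigid)
    {c : Set (P.G × B.G) × Set (P.T × B.T)} (hc : GoodPair φ α c)
    (hmin : ∀ c', GoodPair φ α c' → c'.1 ⊆ c.1 → c'.2 ⊆ c.2 → c' = c) :
    ∀ k ∈ c.1, k.1 = 1 → k = 1 := by
  by_contra hcon
  push_neg at hcon
  obtain ⟨κ, hκmem, hκ1, hκne⟩ := hcon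
  classical
  -- the subgroup `HG` and the space `Sub`
  let HG : Subgroup (P.G × B.G) :=
    { carrier := c.1
      one_mem' := hc.one_mem
      inv_mem' := fun h => hc.inv_mem _ h
      mul_mem' := fun {a b} h h' => hc.mul_mem _ h _ h' }
  haveI : CompactSpace ↥HG := isCompact_iff_compactSpace.mp hc.closedG.isCompact
  let Sub := ↥c.2
  haveI : CompactSpace Sub := isCompact_iff_compactSpace.mp hc.closedS.isCompact
  letI actHS : MulAction ↥HG Sub :=
    { smul := fun h p => ⟨h.1 • p.1, hc.smul_mem h.1 h.2 p.1 p.2⟩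
      one_smul := fun p => Subtype.ext (one_smul _ _)
      mul_smul := fun h h' p => Subtype.ext (mul_smul h.1 h'.1 p.1) }
  have smul_def : ∀ (h : ↥HG) (p : Sub), (h • p).1 = h.1 • p.1 := fun _ _ => rfl
  have contSmulHS : Continuous (fun q : ↥HG × Sub => q.1 • q.2) := by
    apply Continuous.subtype_mk
    exact (continuous_prodSmul P B).comp
      ((continuous_subtype_val.comp continuous_fst).prodMk
        (continuous_subtype_val.comp continuous_snd))
  letI : ContinuousSMul ↥HG Sub := ⟨contSmulHS⟩
  -- the kernel subgroup
  let πH : ↥HG →* P.G := (MonoidHom.fst P.G B.G).comp HG.subtype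
  have hπHcont : Continuous πH := continuous_fst.comp continuous_subtype_val
  let KC : Subgroup ↥HG := MonoidHom.ker πH
  haveI hKCnormal : KC.Normal := MonoidHom.normal_ker πH
  have hKCmem : ∀ h : ↥HG, h ∈ KC ↔ (h.1).1 = 1 := fun h => Iff.rfl
  let κ' : ↥HG := ⟨κ, hκmem⟩
  have hκ'KC : κ' ∈ KC := hκ1
  have hκ'ne : κ' ≠ 1 := fun h => hκne (congrArg Subtype.val h)
  -- freeness of the kernel
  have hfree : ∀ k : ↥HG, k ∈ KC → ∀ p : Sub, k • p = p → k = 1 := by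
    intro k hk p hfix
    refine Subtype.ext (hc.kfree φ α hα k.2 ((hKCmem k).mp hk) p.2 ?_)
    exact congrArg Subtype.val hfix
  -- an open normal subgroup avoiding κ'
  obtain ⟨W, hW, h1W, hκW⟩ := exists_clopen_nhd_not_mem (x := (1 : ↥HG)) (y := κ') hκ'ne
  obtain ⟨M₀, hM₀W⟩ :=
    IsTopologicalGroup.exist_openNormalSubgroup_sub_clopen_nhds_of_one hW h1W
  have hκM₀ : κ' ∉ M₀ := fun h => hκW (hM₀W h)
  -- the compact set of "bad" kernel elements
  have hKCclosed : IsClosed (KC : Set ↥HG) := by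
    have : (KC : Set ↥HG) = πH ⁻¹' {1} := by
      ext h
      simp only [SetLike.mem_coe, Set.mem_preimage, Set.mem_singleton_iff]
      exact Iff.rfl
    rw [this]
    exact isClosed_singleton.preimage hπHcont
  have hM₀closed : IsClosed (M₀ : Set ↥HG) := M₀.toOpenSubgroup.isClosed
  let Kcset : Set ↥HG := (KC : Set ↥HG) \ (M₀ : Set ↥HG)
  have hKcsetcompact : IsCompact Kcset := by
    have hcl : IsClosed Kcset := by
      have : Kcset = (KC : Set ↥HG) ∩ ((M₀ : Set ↥HG))ᶜ := Set.diff_eq _ _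
      rw [this]
      exact hKCclosed.inter (M₀.toOpenSubgroup.isOpen.isClosed_compl)
    exact hcl.isCompact
  have hmove : ∀ k ∈ Kcset, ∀ p : Sub, k • p ≠ p := by
    intro k hk p hfix
    exact hk.2 (by rw [hfree k hk.1 p hfix]; exact M₀.toSubgroup.one_mem)
  -- displacement colouring
  obtain ⟨F, hF, col, hcolopen, hdisp⟩ := displacement_lemma Kcset hKcsetcompact hmove
  have hcolclosed : ∀ f, IsClosed {p : Sub | col p = f} := by
    intro f
    rw [← isOpen_compl_iff]
    have : {p : Sub | col p = f}ᶜ = ⋃ f' ∈ {f' | f' ≠ f}, {p : Sub | col p = f'} := by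
      ext p
      simp only [Set.mem_compl_iff, Set.mem_setOf_eq, Set.mem_iUnion]
      constructor
      · intro h; exact ⟨col p, h, rfl⟩
      · rintro ⟨f', hne, h⟩; rw [h]; exact hne
    rw [this]
    exact isOpen_biUnion fun f' _ => hcolopen f'
  -- the pattern lemma for the function (h, p) ↦ col (h • p)
  obtain ⟨ι, hι, rep, hrep⟩ := pattern_lemma (fun q : ↥HG × Sub => col (q.1 • q.2))
    (fun f => (hcolopen f).preimage contSmulHS)
  -- the relation R₁
  let R₁ : Setoid Sub :=
    { r := fun p p' => ∀ h : ↥HG, col (h • p) = col (h • p')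
      iseqv := ⟨fun p h => rfl, fun h12 h => (h12 h).symm,
        fun h12 h23 h => (h12 h).trans (h23 h)⟩ }
  have hR1inv : ∀ (h : ↥HG) (p p' : Sub), R₁.r p p' → R₁.r (h • p) (h • p') := by
    intro h p p' hpp' h'
    rw [smul_smul, smul_smul]
    exact hpp' (h' * h)
  have hR1iff : ∀ p p' : Sub, R₁.r p p' ↔ ∀ l : ι, col (rep l • p) = col (rep l • p') := by
    intro p p'
    constructor
    · intro h l; exact h (rep l)
    · intro h h'
      obtain ⟨l, hl⟩ := hrep h'
      rw [show col (h' • p) = col (rep l • p) from hl p,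
        show col (h' • p') = col (rep l • p') from hl p']
      exact h l
  have hR1open : ∀ p : Sub, IsOpen {p' | R₁.r p' p} := by
    intro p
    have : {p' | R₁.r p' p} = ⋂ l : ι, {p' | col (rep l • p') = col (rep l • p)} := by
      ext p'
      simp only [Set.mem_setOf_eq, Set.mem_iInter]
      exact hR1iff p' p
    rw [this]
    refine isOpen_iInter_of_finite fun l => ?_
    exact (hcolopen (col (rep l • p))).preimage
      (contSmulHS.comp (continuous_const.prodMk continuous_id))
  have hR1closed : ∀ p : Sub, IsClosed {p' | R₁.r p' p} := by
    intro p
    have : {p' | R₁.r p' p} = ⋂ l : ι, {p' | col (rep l • p') = col (rep l • p)} := by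
      ext p'
      simp only [Set.mem_setOf_eq, Set.mem_iInter]
      exact hR1iff p' p
    rw [this]
    refine isClosed_iInter fun l => ?_
    exact (hcolclosed (col (rep l • p))).preimage
      (contSmulHS.comp (continuous_const.prodMk continuous_id))
  haveI hQR1fin : Finite (Quotient R₁) := by
    have hwd : ∀ p p' : Sub, R₁.r p p' →
        (fun l => col (rep l • p) : ι → F) = (fun l => col (rep l • p')) := by
      intro p p' h
      funext l
      exact (hR1iff p p').mp h l
    refine Finite.of_injective
      (fun q : Quotient R₁ => Quotient.liftOn q (fun p => (fun l => col (rep l • p) : ι → F))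
        hwd) ?_
    intro q q' he
    obtain ⟨p, rfl⟩ := Quotient.exists_rep q
    obtain ⟨p', rfl⟩ := Quotient.exists_rep q'
    refine Quotient.sound ((hR1iff p p').mpr fun l => ?_)
    exact congrFun he l
  -- the subgroup L = KC ⊓ M₀
  let Lsub : Subgroup ↥HG := KC ⊓ M₀.toOpenSubgroup.toSubgroup
  have hLnormal : Lsub.Normal := by
    constructor
    intro x hx g
    rw [Subgroup.mem_inf] at hx ⊢
    exact ⟨hKCnormal.conj_mem x hx.1 g, M₀.isNormal'.conj_mem x hx.2 g⟩
  have hLclosed : IsClosed (Lsub : Set ↥HG) := by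
    have : (Lsub : Set ↥HG) = (KC : Set ↥HG) ∩ (M₀ : Set ↥HG) := rfl
    rw [this]
    exact hKCclosed.inter hM₀closed
  -- the coarsened relation R₂
  let R₂ : Setoid Sub :=
    { r := fun p p' => ∃ k ∈ Lsub, R₁.r (k • p) p'
      iseqv := by
        refine ⟨fun p => ⟨1, Lsub.one_mem, by rw [one_smul]⟩, ?_, ?_⟩
        · rintro p p' ⟨k, hk, hkr⟩
          refine ⟨k⁻¹, Lsub.inv_mem hk, ?_⟩
          have := hR1inv k⁻¹ _ _ hkr
          rw [inv_smul_smul] at this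
          exact R₁.symm this
        · rintro p p' p'' ⟨k, hk, hkr⟩ ⟨k', hk', hkr'⟩
          refine ⟨k' * k, Lsub.mul_mem hk' hk, ?_⟩
          rw [mul_smul]
          exact R₁.trans (hR1inv k' _ _ hkr) hkr' }
  have hR2of1 : ∀ p p' : Sub, R₁.r p p' → R₂.r p p' :=
    fun p p' h => ⟨1, Lsub.one_mem, by rw [one_smul]; exact h⟩
  have hR2inv : ∀ (h : ↥HG) (p p' : Sub), R₂.r p p' → R₂.r (h • p) (h • p') := by
    rintro h p p' ⟨k, hk, hkr⟩
    refine ⟨h * k * h⁻¹, hLnormal.conj_mem k hk h, ?_⟩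
    have : (h * k * h⁻¹) • (h • p) = h • (k • p) := by
      rw [smul_smul, smul_smul]
      congr 1
      group
    rw [this]
    exact hR1inv h _ _ hkr
  have hR2open : ∀ p : Sub, IsOpen {p' | R₂.r p' p} := by
    intro p
    have heq : {p' | R₂.r p' p} = ⋃ (p'' : Sub) (_ : R₂.r p'' p), {p₃ | R₁.r p₃ p''} := by
      ext p₃
      simp only [Set.mem_setOf_eq, Set.mem_iUnion]
      constructor
      · intro h; exact ⟨p₃, h, R₁.refl p₃⟩
      · rintro ⟨p'', h2, h1⟩
        obtain ⟨k, hk, hkr⟩ := h2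
        exact ⟨k, hk, R₁.trans (hR1inv k _ _ h1) hkr⟩
    rw [heq]
    exact isOpen_biUnion fun p'' _ => hR1open p''
  have hR2closed : ∀ p : Sub, IsClosed {p' | R₂.r p' p} := by
    intro p
    have hZ : IsClosed {z : ↥HG × Sub | z.1 ∈ Lsub ∧ R₁.r (z.1 • z.2) p} := by
      refine IsClosed.inter ?_ ?_
      · exact hLclosed.preimage continuous_fst
      · exact (hR1closed p).preimage contSmulHS
    have heq : {p' | R₂.r p' p} =
        Prod.snd '' {z : ↥HG × Sub | z.1 ∈ Lsub ∧ R₁.r (z.1 • z.2) p} := by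
      ext p'
      simp only [Set.mem_setOf_eq, Set.mem_image, Prod.exists]
      constructor
      · rintro ⟨k, hk, hkr⟩; exact ⟨k, p', ⟨hk, hkr⟩, rfl⟩
      · rintro ⟨k, p'', ⟨hk, hkr⟩, he⟩
        rw [← he]
        exact ⟨k, hk, hkr⟩
    rw [heq]
    exact (hZ.isCompact.image continuous_snd).isClosed
  haveI hQR2fin : Finite (Quotient R₂) := by
    refine Finite.of_surjective (Quotient.map' id (fun p p' h => hR2of1 p p' h) :
      Quotient R₁ → Quotient R₂) ?_
    intro q
    obtain ⟨p, rfl⟩ := Quotient.exists_rep q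
    exact ⟨Quotient.mk R₁ p, rfl⟩
  -- the kernel of the action on R₂-classes
  let kerR2 : Subgroup ↥HG :=
    { carrier := {h | ∀ p : Sub, R₂.r (h • p) p}
      one_mem' := fun p => by rw [one_smul]
      inv_mem' := by
        intro h hh p
        have := hh (h⁻¹ • p)
        rw [smul_inv_smul] at this
        exact R₂.symm this
      mul_mem' := by
        intro a b ha hb p
        rw [mul_smul]
        exact R₂.trans (hR2inv a _ _ (hb p)) (ha p) }
  have hkerR2normal : kerR2.Normal := by
    constructor
    intro x hx g p
    have h1 : (g * x * g⁻¹) • p = g • (x • (g⁻¹ • p)) := by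
      rw [smul_smul, smul_smul]
    rw [h1]
    have h2 : R₂.r (x • (g⁻¹ • p)) (g⁻¹ • p) := hx (g⁻¹ • p)
    have h3 := hR2inv g _ _ h2
    rw [smul_inv_smul] at h3
    exact h3
  have hkerR2open : IsOpen (kerR2 : Set ↥HG) := by
    have heq : (kerR2 : Set ↥HG)
        = ⋂ q : Quotient R₂, {h : ↥HG | R₂.r (h • q.out) q.out} := by
      ext h
      simp only [SetLike.mem_coe, Set.mem_iInter, Set.mem_setOf_eq]
      constructor
      · intro hh q; exact hh q.out
      · intro hh p
        have hpo : R₂.r (Quotient.mk R₂ p).out p := Quotient.mk_out p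
        have h1 : R₂.r (h • p) (h • (Quotient.mk R₂ p).out) := hR2inv h _ _ (R₂.symm hpo)
        exact R₂.trans (R₂.trans h1 (hh (Quotient.mk R₂ p))) hpo
    rw [heq]
    refine isOpen_iInter_of_finite fun q => ?_
    exact (hR2open q.out).preimage
      (contSmulHS.comp (continuous_id.prodMk continuous_const))
  -- the open normal subgroup M
  let M : Subgroup ↥HG := M₀.toOpenSubgroup.toSubgroup ⊓ kerR2
  haveI hMnormal : M.Normal := by
    constructor
    intro x hx g
    rw [Subgroup.mem_inf] at hx ⊢
    exact ⟨M₀.isNormal'.conj_mem x hx.1 g, hkerR2normal.conj_mem x hx.2 g⟩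
  have hMopen : IsOpen (M : Set ↥HG) := by
    have : (M : Set ↥HG) = (M₀ : Set ↥HG) ∩ (kerR2 : Set ↥HG) := rfl
    rw [this]
    exact (M₀.toOpenSubgroup.isOpen).inter hkerR2open
  have hκM : κ' ∉ M := fun h => hκM₀ (Subgroup.mem_inf.mp h).1
  have hMker : ∀ m ∈ M, ∀ p : Sub, R₂.r (m • p) p := fun m hm => (Subgroup.mem_inf.mp hm).2
  have hMfree : ∀ k ∈ KC, ∀ p : Sub, R₂.r (k • p) p → k ∈ M := by
    intro k hk p hrel
    obtain ⟨k', hk', hkr⟩ := hrel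
    rw [smul_smul] at hkr
    -- k' * k ∈ KC
    have hkkKC : k' * k ∈ KC := KC.mul_mem (Subgroup.mem_inf.mp hk').1 hk
    -- k' * k ∈ M₀, else displacement contradicts hkr at h = 1
    have hkkM₀ : k' * k ∈ M₀.toOpenSubgroup.toSubgroup := by
      by_contra hnot
      have hKcmem : (k' * k) ∈ Kcset := ⟨hkkKC, hnot⟩
      have := hdisp _ hKcmem p
      have h1 := hkr 1
      rw [one_smul, one_smul] at h1
      exact this h1
    have hkkL : k' * k ∈ Lsub := Subgroup.mem_inf.mpr ⟨hkkKC, hkkM₀⟩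
    have hkL : k ∈ Lsub := by
      have : k = k'⁻¹ * (k' * k) := by group
      rw [this]
      exact Lsub.mul_mem (Lsub.inv_mem hk') hkkL
    refine Subgroup.mem_inf.mpr ⟨(Subgroup.mem_inf.mp hkL).2, ?_⟩
    intro p'
    exact ⟨k⁻¹, Lsub.inv_mem hkL, by rw [inv_smul_smul]⟩
  -- the finite quotient level
  let Gb := ↥HG ⧸ M
  let Tb := Quotient R₂
  haveI hGbdisc : DiscreteTopology Gb := discreteTopology_quotientGroup_of_isOpen M hMopen
  haveI hGbfin : Finite Gb := finite_of_compact_of_discrete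
  haveI hTbdisc : DiscreteTopology Tb := by
    refine discreteTopology_iff_isOpen_singleton.mpr fun q => ?_
    obtain ⟨p₀, rfl⟩ := Quotient.exists_rep q
    refine isQuotientMap_quotient_mk'.isOpen_preimage.mp ?_
    have heq : (Quotient.mk' : Sub → Tb) ⁻¹' {Quotient.mk R₂ p₀} = {p | R₂.r p p₀} := by
      ext p
      simp only [Set.mem_preimage, Set.mem_singleton_iff, Set.mem_setOf_eq]
      exact Quotient.eq (r := R₂)
    rw [heq]
    exact hR2open p₀
  letI actb : MulAction Gb Tb :=
    { smul := fun gq tq => Quotient.liftOn₂' gq tq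
        (fun h p => Quotient.mk R₂ (h • p)) (by
          intro h₁ p₁ h₂ p₂ hh hp
          apply Quotient.sound
          have hm : h₁⁻¹ * h₂ ∈ M := QuotientGroup.leftRel_apply.mp hh
          have he : h₂ • p₂ = h₁ • ((h₁⁻¹ * h₂) • p₂) := by
            rw [smul_smul]
            congr 1
            group
          rw [he]
          exact R₂.trans (hR2inv h₁ _ _ hp)
            (hR2inv h₁ _ _ (R₂.symm (hMker _ hm p₂))))
      one_smul := fun tq => by
        refine Quotient.inductionOn tq (fun p => ?_)
        show Quotient.mk R₂ ((1 : ↥HG) • p) = _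
        rw [one_smul]
      mul_smul := fun x y tq => by
        refine Quotient.inductionOn tq (fun p => ?_)
        refine Quotient.inductionOn₂ x y (fun a b => ?_)
        show Quotient.mk R₂ ((a * b) • p) = Quotient.mk R₂ (a • (b • p))
        rw [mul_smul] }
  have hsmulmk : ∀ (h : ↥HG) (p : Sub),
      (QuotientGroup.mk h : Gb) • (Quotient.mk R₂ p) = Quotient.mk R₂ (h • p) :=
    fun h p => rfl
  let Kb : Subgroup Gb := KC.map (QuotientGroup.mk' M)
  haveI hKbnormal : Kb.Normal :=
    Subgroup.Normal.map hKCnormal _ (QuotientGroup.mk'_surjective M)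
  have freeb : ∀ n ∈ Kb, ∀ tb : Tb, n • tb = tb → n = 1 := by
    intro n hn tb hfix
    obtain ⟨k, hkKC, rfl⟩ := Subgroup.mem_map.mp hn
    obtain ⟨p, rfl⟩ := Quotient.exists_rep tb
    have h1 : Quotient.mk R₂ (k • p) = Quotient.mk R₂ p := by
      rw [← hsmulmk]
      exact hfix
    have hkM : k ∈ M := hMfree k hkKC p (Quotient.exact h1)
    exact (QuotientGroup.eq_one_iff k).mpr hkM
  -- the finite piles and the rigid quotient morphism
  let Cb : Pile := finPile Gb Tb
  let Pb : Pile := quotFinPile Gb Tb Kb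
  let ab : PileHom Cb Pb := quotFinHom Gb Tb Kb
  have habrigid : ab.IsRigid := quotFinHom_isRigid Gb Tb Kb freeb
  have hCbfin : Cb.IsFinite := ⟨hGbfin, hQR2fin⟩
  -- the projection morphism π̄ : P → Pb
  let Phi : ↥HG → Pb.G := fun h => QuotientGroup.mk (QuotientGroup.mk h : Gb)
  have hPhicont : Continuous Phi :=
    (QuotientGroup.isQuotientMap_mk Kb).continuous.comp
      (QuotientGroup.isQuotientMap_mk M).continuous
  have hPhimul : ∀ a b : ↥HG, Phi (a * b) = Phi a * Phi b := by
    intro a b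
    show QuotientGroup.mk (QuotientGroup.mk (a * b) : Gb) = _
    rw [show (QuotientGroup.mk (a * b) : Gb)
      = QuotientGroup.mk a * QuotientGroup.mk b from rfl]
    rfl
  have hindepG : ∀ h h' : ↥HG, (h.1).1 = (h'.1).1 → Phi h = Phi h' := by
    intro h h' he
    apply QuotientGroup.eq.mpr
    have h2 : (QuotientGroup.mk h : Gb)⁻¹ * QuotientGroup.mk h'
        = QuotientGroup.mk (h⁻¹ * h') := rfl
    rw [h2]
    refine Subgroup.mem_map.mpr ⟨h⁻¹ * h', ?_, rfl⟩
    show ((h⁻¹ * h').1).1 = 1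
    show (h.1.1)⁻¹ * h'.1.1 = 1
    rw [he, inv_mul_cancel]
  let sEG : P.G → ↥HG := fun g => ⟨(hc.e1 g).choose, (hc.e1 g).choose_spec.1⟩
  have hsEG : ∀ g, ((sEG g).1).1 = g := fun g => (hc.e1 g).choose_spec.2
  let f0 : P.G → Pb.G := fun g => Phi (sEG g)
  have hf0spec : ∀ h : ↥HG, f0 ((h.1).1) = Phi h := fun h => hindepG _ h (by rw [hsEG])
  have hπHval : Continuous (fun h : ↥HG => (h.1).1) :=
    continuous_fst.comp continuous_subtype_val
  haveI hPbGdisc : DiscreteTopology Pb.G := inferInstance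
  haveI hPbGt2 : T2Space Pb.G := inferInstance
  have himage0 : ∀ s : Set Pb.G, f0 ⁻¹' s = (fun h : ↥HG => (h.1).1) '' (Phi ⁻¹' s) := by
    intro s
    ext g
    simp only [Set.mem_preimage, Set.mem_image]
    constructor
    · intro h
      exact ⟨sEG g, h, hsEG g⟩
    · rintro ⟨h, hh, rfl⟩
      rw [hf0spec]
      exact hh
  have hf0cont : Continuous f0 := by
    rw [continuous_discrete_rng]
    intro x
    have h1 : IsClosed (f0 ⁻¹' {x}ᶜ) := by
      rw [show f0 ⁻¹' {x}ᶜ = (fun h : ↥HG => (h.1).1) '' (Phi ⁻¹' {x}ᶜ) from himage0 _]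
      exact (((isClosed_discrete _).preimage hPhicont).isCompact.image hπHval).isClosed
    have h2 : f0 ⁻¹' {x} = (f0 ⁻¹' {x}ᶜ)ᶜ := by
      rw [Set.preimage_compl, compl_compl]
    rw [h2]
    exact h1.isOpen_compl
  -- the spatial part
  let PsiT : Sub → Pb.T := fun p => Quotient.mk (orbSetoid Gb Tb Kb) (Quotient.mk R₂ p)
  have hPsicont : Continuous PsiT :=
    isQuotientMap_quotient_mk'.continuous.comp isQuotientMap_quotient_mk'.continuous
  have hindepT : ∀ p p' : Sub, (p.1).1 = (p'.1).1 → PsiT p = PsiT p' := by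
    intro p p' he
    obtain ⟨k, hkc, hk1, hkp⟩ := hc.kfiber φ α p.2 p'.2 he
    have hk'p : (⟨k, hkc⟩ : ↥HG) • p' = p := Subtype.ext hkp
    apply Quotient.sound
    refine ⟨QuotientGroup.mk (⟨k, hkc⟩ : ↥HG)⁻¹,
      Subgroup.mem_map.mpr ⟨(⟨k, hkc⟩ : ↥HG)⁻¹, KC.inv_mem hk1, rfl⟩, ?_⟩
    rw [hsmulmk, ← hk'p, inv_smul_smul]
  let sET : P.T → Sub := fun t => ⟨(hc.e2 t).choose, (hc.e2 t).choose_spec.1⟩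
  have hsET : ∀ t, ((sET t).1).1 = t := fun t => (hc.e2 t).choose_spec.2
  let f1 : P.T → Pb.T := fun t => PsiT (sET t)
  have hf1spec : ∀ p : Sub, f1 ((p.1).1) = PsiT p := fun p => hindepT _ p (by rw [hsET])
  have hπTval : Continuous (fun p : Sub => (p.1).1) :=
    continuous_fst.comp continuous_subtype_val
  haveI hPbTdisc : DiscreteTopology Pb.T := inferInstance
  have himage1 : ∀ s : Set Pb.T, f1 ⁻¹' s = (fun p : Sub => (p.1).1) '' (PsiT ⁻¹' s) := by
    intro s
    ext t
    simp only [Set.mem_preimage, Set.mem_image]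
    constructor
    · intro h
      exact ⟨sET t, h, hsET t⟩
    · rintro ⟨p, hp, rfl⟩
      rw [hf1spec]
      exact hp
  have hf1cont : Continuous f1 := by
    rw [continuous_discrete_rng]
    intro x
    have h1 : IsClosed (f1 ⁻¹' {x}ᶜ) := by
      rw [show f1 ⁻¹' {x}ᶜ = (fun p : Sub => (p.1).1) '' (PsiT ⁻¹' {x}ᶜ) from himage1 _]
      exact (((isClosed_discrete _).preimage hPsicont).isCompact.image hπTval).isClosed
    have h2 : f1 ⁻¹' {x} = (f1 ⁻¹' {x}ᶜ)ᶜ := by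
      rw [Set.preimage_compl, compl_compl]
    rw [h2]
    exact h1.isOpen_compl
  have hf1equiv : ∀ (g : P.G) (t : P.T), f1 (g • t) = f0 g • f1 t := by
    intro g t
    have h1 : (((sEG g) • (sET t)).1).1 = g • t := by
      show (sEG g).1.1 • (sET t).1.1 = g • t
      rw [hsEG, hsET]
    calc f1 (g • t) = PsiT ((sEG g) • (sET t)) := by rw [← h1, hf1spec]
      _ = Quotient.mk (orbSetoid Gb Tb Kb)
            ((QuotientGroup.mk (sEG g) : Gb) • Quotient.mk R₂ (sET t)) := by rw [hsmulmk]
      _ = f0 g • f1 t := rfl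
  let pibar : PileHom P Pb :=
    { toGrp :=
      { toFun := f0
        map_one' := by
          rw [show (1 : P.G) = (((1 : ↥HG)).1).1 from rfl, hf0spec]
          rfl
        map_mul' := by
          intro g g'
          have h1 : ((sEG g * sEG g').1).1 = g * g' := by
            show (sEG g).1.1 * (sEG g').1.1 = g * g'
            rw [hsEG, hsEG]
          show f0 (g * g') = f0 g * f0 g'
          rw [← h1, hf0spec, hPhimul] }
      contGrp := hf0cont
      toSp := f1
      contSp := hf1cont
      equivariant := hf1equiv }
  -- solve the finite embedding problem
  obtain ⟨gb, hgb⟩ := hP Pb Cb hCbfin pibar ab habrigid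
  have hgbG : ∀ g, (QuotientGroup.mk (gb.toGrp g) : Gb ⧸ Kb) = f0 g := by
    intro g
    exact congrArg (fun ψ : PileHom P Pb => ψ.toGrp g) hgb
  have hgbT : ∀ t, Quotient.mk (orbSetoid Gb Tb Kb) (gb.toSp t) = f1 t := by
    intro t
    exact congrArg (fun ψ : PileHom P Pb => ψ.toSp t) hgb
  -- the descended pair c'
  let c' : Set (P.G × B.G) × Set (P.T × B.T) :=
    ({d | ∃ hd : d ∈ c.1, (QuotientGroup.mk (⟨d, hd⟩ : ↥HG) : Gb) = gb.toGrp d.1},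
     {p | ∃ hp : p ∈ c.2, Quotient.mk R₂ (⟨p, hp⟩ : Sub) = gb.toSp p.1})
  have hmem1 : ∀ h : ↥HG,
      (h.1 ∈ c'.1 ↔ (QuotientGroup.mk h : Gb) = gb.toGrp ((h.1).1)) := by
    intro h
    constructor
    · rintro ⟨hd, he⟩; exact he
    · intro he; exact ⟨h.2, he⟩
  have hmem2 : ∀ p : Sub,
      (p.1 ∈ c'.2 ↔ Quotient.mk R₂ p = gb.toSp ((p.1).1)) := by
    intro p
    constructor
    · rintro ⟨hp, he⟩; exact he
    · intro he; exact ⟨p.2, he⟩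
  have hc' : GoodPair φ α c' := by
    constructor
    · -- one_mem
      refine ⟨hc.one_mem, ?_⟩
      rw [show ((1 : P.G × B.G)).1 = (1 : P.G) from rfl, map_one]
      rfl
    · -- inv_mem
      rintro d ⟨hd, he⟩
      refine ⟨hc.inv_mem _ hd, ?_⟩
      have h1 : (QuotientGroup.mk (⟨d⁻¹, hc.inv_mem _ hd⟩ : ↥HG) : Gb)
          = (QuotientGroup.mk (⟨d, hd⟩ : ↥HG) : Gb)⁻¹ := rfl
      rw [h1, he, show (d⁻¹).1 = d.1⁻¹ from rfl, map_inv]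
    · -- mul_mem
      rintro d ⟨hd, he⟩ d' ⟨hd', he'⟩
      refine ⟨hc.mul_mem _ hd _ hd', ?_⟩
      have h1 : (QuotientGroup.mk (⟨d * d', hc.mul_mem _ hd _ hd'⟩ : ↥HG) : Gb)
          = (QuotientGroup.mk (⟨d, hd⟩ : ↥HG) : Gb)
            * QuotientGroup.mk (⟨d', hd'⟩ : ↥HG) := rfl
      rw [h1, he, he', show (d * d').1 = d.1 * d'.1 from rfl, map_mul]
    · -- closedG
      have hE : IsClosed {h : ↥HG | (QuotientGroup.mk h : Gb) = gb.toGrp ((h.1).1)} :=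
        isClosed_eq (QuotientGroup.isQuotientMap_mk M).continuous (gb.contGrp.comp hπHval)
      have heq : c'.1 = Subtype.val ''
          {h : ↥HG | (QuotientGroup.mk h : Gb) = gb.toGrp ((h.1).1)} := by
        ext d
        constructor
        · rintro ⟨hd, he⟩; exact ⟨⟨d, hd⟩, he, rfl⟩
        · rintro ⟨h, hh, rfl⟩; exact (hmem1 h).mpr hh
      rw [heq]
      exact (hE.isCompact.image continuous_subtype_val).isClosed
    · -- closedS
      have hE : IsClosed {p : Sub | Quotient.mk R₂ p = gb.toSp ((p.1).1)} :=
        isClosed_eq isQuotientMap_quotient_mk'.continuous (gb.contSp.comp hπTval)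
      have heq : c'.2 = Subtype.val ''
          {p : Sub | Quotient.mk R₂ p = gb.toSp ((p.1).1)} := by
        ext p
        constructor
        · rintro ⟨hp, he⟩; exact ⟨⟨p, hp⟩, he, rfl⟩
        · rintro ⟨p', hp', rfl⟩; exact (hmem2 p').mpr hp'
      rw [heq]
      exact (hE.isCompact.image continuous_subtype_val).isClosed
    · -- compatG
      rintro d ⟨hd, -⟩; exact hc.compatG d hd
    · -- compatS
      rintro p ⟨hp, -⟩; exact hc.compatS p hp
    · -- smul_mem
      rintro d ⟨hd, hed⟩ p ⟨hp, hep⟩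
      refine ⟨hc.smul_mem _ hd _ hp, ?_⟩
      have h1 : (⟨d • p, hc.smul_mem _ hd _ hp⟩ : Sub)
          = (⟨d, hd⟩ : ↥HG) • (⟨p, hp⟩ : Sub) := rfl
      rw [h1, ← hsmulmk, hed, hep, show (d • p).1 = d.1 • p.1 from rfl,
        ← gb.equivariant]
    · -- e1
      intro g
      obtain ⟨d0, hd0, hd01⟩ := hc.e1 g
      have hcomp : (QuotientGroup.mk (gb.toGrp g) : Gb ⧸ Kb)
          = QuotientGroup.mk (QuotientGroup.mk (⟨d0, hd0⟩ : ↥HG) : Gb) := by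
        rw [hgbG g, ← hd01]
        exact hf0spec ⟨d0, hd0⟩
      have hker : (QuotientGroup.mk (⟨d0, hd0⟩ : ↥HG) : Gb)⁻¹ * gb.toGrp g ∈ Kb :=
        QuotientGroup.eq.mp hcomp.symm
      obtain ⟨z, hzKC, hz⟩ := Subgroup.mem_map.mp hker
      have hz1 : ((z.1).1) = 1 := hzKC
      have hfirst : ((((⟨d0, hd0⟩ : ↥HG) * z).1).1) = g := by
        show d0.1 * ((z.1).1) = g
        rw [hz1, mul_one, hd01]
      refine ⟨((⟨d0, hd0⟩ : ↥HG) * z).1, ?_, hfirst⟩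
      refine (hmem1 _).mpr ?_
      have h1 : (QuotientGroup.mk ((⟨d0, hd0⟩ : ↥HG) * z) : Gb)
          = QuotientGroup.mk (⟨d0, hd0⟩ : ↥HG) * QuotientGroup.mk z := rfl
      rw [h1, show (QuotientGroup.mk z : Gb) = (QuotientGroup.mk' M) z from rfl, hz,
        mul_inv_cancel_left, hfirst]
    · -- e2
      intro t
      obtain ⟨p0, hp0, hp01⟩ := hc.e2 t
      have hcomp : Quotient.mk (orbSetoid Gb Tb Kb) (gb.toSp t)
          = Quotient.mk (orbSetoid Gb Tb Kb) (Quotient.mk R₂ (⟨p0, hp0⟩ : Sub)) := by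
        rw [hgbT t, ← hp01]
        exact hf1spec ⟨p0, hp0⟩
      obtain ⟨n, hnKb, hn⟩ := Quotient.exact hcomp
      obtain ⟨z, hzKC, hz⟩ := Subgroup.mem_map.mp hnKb
      have hts : gb.toSp t = Quotient.mk R₂ (z⁻¹ • (⟨p0, hp0⟩ : Sub)) := by
        have h2 := congrArg (fun x => n⁻¹ • x) hn
        simp only [inv_smul_smul] at h2
        rw [h2, ← hz]
        rw [show ((QuotientGroup.mk' M) z)⁻¹ = (QuotientGroup.mk z⁻¹ : Gb) from rfl,
          hsmulmk]
      have hfirst : (((z⁻¹ • (⟨p0, hp0⟩ : Sub)).1).1) = t := by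
        show ((z⁻¹).1).1 • p0.1 = t
        have hz1 : ((z⁻¹).1).1 = 1 := by
          show ((z.1).1)⁻¹ = 1
          rw [show ((z.1).1) = 1 from hzKC, inv_one]
        rw [hz1, one_smul, hp01]
      refine ⟨(z⁻¹ • (⟨p0, hp0⟩ : Sub)).1, ?_, hfirst⟩
      refine (hmem2 _).mpr ?_
      rw [hfirst]
      exact hts.symm
    · -- e3
      rintro p ⟨hp, hep⟩ g hg
      obtain ⟨d0, hd0, hd01, hd0p⟩ := hc.e3 p hp g hg
      have hstab1 : (QuotientGroup.mk (⟨d0, hd0⟩ : ↥HG) : Gb)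
          ∈ MulAction.stabilizer Gb (gb.toSp p.1) := by
        rw [MulAction.mem_stabilizer_iff, ← hep, hsmulmk]
        congr 1
        exact Subtype.ext hd0p
      have hstab2 : gb.toGrp g ∈ MulAction.stabilizer Gb (gb.toSp p.1) := by
        rw [MulAction.mem_stabilizer_iff, ← gb.equivariant, hg]
      have himeq : (QuotientGroup.mk' Kb) (QuotientGroup.mk (⟨d0, hd0⟩ : ↥HG) : Gb)
          = (QuotientGroup.mk' Kb) (gb.toGrp g) := by
        show (QuotientGroup.mk (QuotientGroup.mk (⟨d0, hd0⟩ : ↥HG) : Gb) : Gb ⧸ Kb)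
          = QuotientGroup.mk (gb.toGrp g)
        rw [hgbG g, ← hd01]
        exact (hf0spec ⟨d0, hd0⟩).symm
      have hfin := (habrigid.2.1 (gb.toSp p.1)).1 hstab1 hstab2 himeq
      refine ⟨d0, (hmem1 ⟨d0, hd0⟩).mpr ?_, hd01, hd0p⟩
      rw [show ((⟨d0, hd0⟩ : ↥HG).1).1 = d0.1 from rfl, hd01]
      exact hfin
    · -- e4
      rintro p ⟨hp, hep⟩ p' ⟨hp', hep'⟩ hex
      obtain ⟨d0, hd0, hd0p⟩ := hc.e4 p hp p' hp' hex
      have hgact : d0.1 • p'.1 = p.1 := congrArg Prod.fst hd0p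
      have hwKb : (gb.toGrp d0.1)⁻¹ * (QuotientGroup.mk (⟨d0, hd0⟩ : ↥HG) : Gb) ∈ Kb := by
        have h1 : (QuotientGroup.mk
            ((gb.toGrp d0.1)⁻¹ * QuotientGroup.mk (⟨d0, hd0⟩ : ↥HG)) : Gb ⧸ Kb) = 1 := by
          have h2 : (QuotientGroup.mk
              ((gb.toGrp d0.1)⁻¹ * QuotientGroup.mk (⟨d0, hd0⟩ : ↥HG)) : Gb ⧸ Kb)
              = (QuotientGroup.mk (gb.toGrp d0.1) : Gb ⧸ Kb)⁻¹
                * QuotientGroup.mk (QuotientGroup.mk (⟨d0, hd0⟩ : ↥HG) : Gb) := rfl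
          have hPhieq : (QuotientGroup.mk (QuotientGroup.mk (⟨d0, hd0⟩ : ↥HG) : Gb) :
              Gb ⧸ Kb) = f0 d0.1 := (hf0spec ⟨d0, hd0⟩).symm
          rw [h2, hgbG d0.1, hPhieq, inv_mul_cancel]
        exact (QuotientGroup.eq_one_iff _).mp h1
      have hstab : ((gb.toGrp d0.1)⁻¹ * QuotientGroup.mk (⟨d0, hd0⟩ : ↥HG)) • gb.toSp p'.1
          = gb.toSp p'.1 := by
        rw [mul_smul]
        have h2 : (QuotientGroup.mk (⟨d0, hd0⟩ : ↥HG) : Gb) • gb.toSp p'.1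
            = gb.toSp p.1 := by
          rw [← hep', hsmulmk,
            show (⟨d0, hd0⟩ : ↥HG) • (⟨p', hp'⟩ : Sub) = (⟨p, hp⟩ : Sub) from
              Subtype.ext hd0p, hep]
        have h3 : gb.toGrp d0.1 • gb.toSp p'.1 = gb.toSp p.1 := by
          rw [← gb.equivariant, hgact]
        rw [h2, ← h3, inv_smul_smul]
      have hw1 := freeb _ hwKb _ hstab
      have heq0 : (QuotientGroup.mk (⟨d0, hd0⟩ : ↥HG) : Gb) = gb.toGrp d0.1 :=
        (inv_mul_eq_one.mp hw1).symm
      exact ⟨d0, (hmem1 ⟨d0, hd0⟩).mpr heq0, hd0p⟩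
  -- minimality gives c' = c, contradiction with κ
  have hsub1 : c'.1 ⊆ c.1 := by rintro d ⟨hd, -⟩; exact hd
  have hsub2 : c'.2 ⊆ c.2 := by rintro p ⟨hp, -⟩; exact hp
  have hceq := hmin c' hc' hsub1 hsub2
  have hκc' : κ ∈ c'.1 := by rw [hceq]; exact hκmem
  obtain ⟨hκ'', heκ⟩ := hκc'
  have h1 : (QuotientGroup.mk (⟨κ, hκ''⟩ : ↥HG) : Gb) = 1 := by
    rw [heκ, hκ1, map_one]
  exact hκM ((QuotientGroup.eq_one_iff _).mp h1)

end Descent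

/-- Let `𝐆` be a projective pile. Then every embedding problem for `𝐆` (not necessarily
finite) has a solution. -/
theorem projective_pile_solves_all_embedding_problems
    (P : Pile) (hP : P.IsProjective)
    (A B : Pile) (φ : PileHom P A) (α : PileHom B A) (hα : α.IsRigid) :
    ∃ γ : PileHom P B, α.comp γ = φ := by
  classical
  obtain ⟨c, hc, hmin⟩ := exists_minimal_goodPair φ α hα
  have hker := goodPair_min_ker_trivial φ α hP hα hc hmin
  have hinjG : ∀ d ∈ c.1, ∀ d' ∈ c.1, d.1 = d'.1 → d = d' := by
    intro d hd d' hd' he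
    have h1 : (d⁻¹ * d') ∈ c.1 := hc.mul_mem _ (hc.inv_mem _ hd) _ hd'
    have h2 : (d⁻¹ * d').1 = 1 := by
      show d.1⁻¹ * d'.1 = 1
      rw [← he, inv_mul_cancel]
    exact inv_mul_eq_one.mp (hker _ h1 h2)
  have hinjT : ∀ p ∈ c.2, ∀ p' ∈ c.2, p.1 = p'.1 → p = p' := by
    intro p hp p' hp' he
    obtain ⟨k, hk, hk1, hkp⟩ := hc.kfiber φ α hp' hp he.symm
    have := hker k hk hk1
    rw [this, one_smul] at hkp
    exact hkp
  haveI : CompactSpace ↥c.1 := isCompact_iff_compactSpace.mp hc.closedG.isCompact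
  haveI : CompactSpace ↥c.2 := isCompact_iff_compactSpace.mp hc.closedS.isCompact
  have hbijG : Function.Bijective (fun h : ↥c.1 => (h.1).1) := by
    constructor
    · intro h h' he
      exact Subtype.ext (hinjG _ h.2 _ h'.2 he)
    · intro g
      obtain ⟨d, hd, h1⟩ := hc.e1 g
      exact ⟨⟨d, hd⟩, h1⟩
  have hbijT : Function.Bijective (fun p : ↥c.2 => (p.1).1) := by
    constructor
    · intro p p' he
      exact Subtype.ext (hinjT _ p.2 _ p'.2 he)
    · intro t
      obtain ⟨p, hp, h1⟩ := hc.e2 t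
      exact ⟨⟨p, hp⟩, h1⟩
  let eG : ↥c.1 ≃ P.G := Equiv.ofBijective _ hbijG
  let eT : ↥c.2 ≃ P.T := Equiv.ofBijective _ hbijT
  have hcontG : Continuous (eG : ↥c.1 → P.G) :=
    continuous_fst.comp continuous_subtype_val
  have hcontT : Continuous (eT : ↥c.2 → P.T) :=
    continuous_fst.comp continuous_subtype_val
  let homeoG := Continuous.homeoOfEquivCompactToT2 (f := eG) hcontG
  let homeoT := Continuous.homeoOfEquivCompactToT2 (f := eT) hcontT
  let sG : P.G → ↥c.1 := fun g => homeoG.symm g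
  let sT : P.T → ↥c.2 := fun t => homeoT.symm t
  have hsG : ∀ g, ((sG g).1).1 = g := fun g => homeoG.apply_symm_apply g
  have hsT : ∀ t, ((sT t).1).1 = t := fun t => homeoT.apply_symm_apply t
  have hsGu : ∀ (h : ↥c.1), sG ((h.1).1) = h := fun h => homeoG.symm_apply_apply h
  have hsGmul : ∀ g g', (sG (g * g')).1 = (sG g).1 * (sG g').1 := by
    intro g g'
    have hmem : (sG g).1 * (sG g').1 ∈ c.1 := hc.mul_mem _ (sG g).2 _ (sG g').2
    have : sG (g * g') = ⟨(sG g).1 * (sG g').1, hmem⟩ := by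
      have := hsGu ⟨(sG g).1 * (sG g').1, hmem⟩
      rw [show (((⟨(sG g).1 * (sG g').1, hmem⟩ : ↥c.1)).1).1
        = ((sG g).1).1 * ((sG g').1).1 from rfl, hsG, hsG] at this
      exact this
    rw [this]
  have hsTsmul : ∀ g t, (sT (g • t)).1 = (sG g).1 • (sT t).1 := by
    intro g t
    have hmem : (sG g).1 • (sT t).1 ∈ c.2 := hc.smul_mem _ (sG g).2 _ (sT t).2
    have h1 : (((sG g).1 • (sT t).1)).1 = g • t := by
      have h0 : ((sG g).1 • (sT t).1).1 = ((sG g).1).1 • ((sT t).1).1 := rfl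
      rw [h0, hsG, hsT]
    have := hinjT _ (sT (g • t)).2 _ hmem (by rw [hsT, h1])
    exact this
  refine ⟨{ toGrp := { toFun := fun g => ((sG g).1).2
                       map_one' := ?_
                       map_mul' := ?_ }
            contGrp := (continuous_snd.comp continuous_subtype_val).comp
              homeoG.symm.continuous
            toSp := fun t => ((sT t).1).2
            contSp := (continuous_snd.comp continuous_subtype_val).comp
              homeoT.symm.continuous
            equivariant := ?_ }, ?_⟩
  · -- map_one
    have h1 : sG 1 = ⟨1, hc.one_mem⟩ := hsGu ⟨1, hc.one_mem⟩
    show ((sG (1 : P.G)).1).2 = 1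
    rw [h1]
    rfl
  · -- map_mul
    intro g g'
    show ((sG (g * g')).1).2 = ((sG g).1).2 * ((sG g').1).2
    rw [hsGmul]
    rfl
  · -- equivariance
    intro g t
    show ((sT (g • t)).1).2 = ((sG g).1).2 • ((sT t).1).2
    rw [hsTsmul]
    rfl
  · -- α.comp γ = φ
    refine PileHom.ext' ?_ ?_
    · refine MonoidHom.ext fun g => ?_
      show α.toGrp ((sG g).1).2 = φ.toGrp g
      rw [← hc.compatG _ (sG g).2, hsG]
    · funext t
      show α.toSp ((sT t).1).2 = φ.toSp t
      rw [← hc.compatS _ (sT t).2, hsT]
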